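/- arXiv:1710.09539 — 2 statements merged into one kernel-verified Lean document; each statement's English description precedes it below -/
import Mathlib

section
/- For every n ∈ ℕ and t > 0, ∑_{j=n+1}^∞ (1 - e^{-2(jπ)² t})/(2(jπ)²) ≥ t/(2(1+2π² t)) · (1/n). -/
/-! With `λ = 2 (kπ)²`, the inequality `e^{λt} ≥ 1 + λt` gives `(1 - e^{-λt}) / λ ≥ t / (1 + λt)`,
and for `k ≥ 1` this dominates `c (1/k - 1/(k+1))` with `c = t / (1 + 2π²t)`. Summing over
`k ≥ n + 1`, the tail is at least the telescoping sum `c / (n + 1) ≥ c / (2n)`. -/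

open Real Filter Topology

lemma div_one_add_le_one_sub_exp_neg {x : ℝ} (hx : 0 ≤ x) : x / (1 + x) ≤ 1 - exp (-x) := by
  have hexp : exp (-x) ≤ (1 + x)⁻¹ := by
    rw [exp_neg]
    exact inv_anti₀ (by positivity) (by linarith [add_one_le_exp x])
  have hsplit : x / (1 + x) = 1 - (1 + x)⁻¹ := by field_simp; ring
  linarith

lemma div_one_add_mul_le_one_sub_exp_div {a t : ℝ} (ha : 0 < a) (ht : 0 ≤ t) :
    t / (1 + a * t) ≤ (1 - exp (-(a * t))) / a := by
  rw [le_div_iff₀ ha, div_mul_eq_mul_div, mul_comm]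
  exact div_one_add_le_one_sub_exp_neg (by positivity)

lemma hasSum_sub_succ_of_antitone {f : ℕ → ℝ} (hf : Antitone f) (h0 : Tendsto f atTop (𝓝 0)) :
    HasSum (fun n => f n - f (n + 1)) (f 0) := by
  rw [hasSum_iff_tendsto_nat_of_nonneg fun n => sub_nonneg.2 (hf n.le_succ)]
  simp only [Finset.sum_range_sub']
  simpa using h0.const_sub (f 0)

lemma hasSum_inv_sub_inv_succ {a : ℝ} (ha : 0 < a) :
    HasSum (fun j : ℕ => 1 / (a + j) - 1 / (a + j + 1)) (1 / a) := by
  have hanti : Antitone fun j : ℕ => 1 / (a + j) := fun i j hij =>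
    one_div_le_one_div_of_le (by positivity) (by gcongr)
  have h0 : Tendsto (fun j : ℕ => 1 / (a + j)) atTop (𝓝 0) := by
    simp only [one_div]
    exact tendsto_inv_atTop_zero.comp (tendsto_atTop_add_const_left _ a tendsto_natCast_atTop_atTop)
  simpa [add_assoc] using hasSum_sub_succ_of_antitone hanti h0

lemma one_sub_exp_div_nonneg (x : ℝ) {t : ℝ} (ht : 0 ≤ t) :
    0 ≤ (1 - exp (-2 * x ^ 2 * t)) / (2 * x ^ 2) := by
  have : exp (-2 * x ^ 2 * t) ≤ 1 := exp_le_one_iff.2 (by nlinarith [sq_nonneg x])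
  exact div_nonneg (by linarith) (by positivity)

lemma mul_inv_sub_inv_succ_le_one_sub_exp_div {k t : ℝ} (hk : 1 ≤ k) (ht : 0 ≤ t) :
    t / (1 + 2 * π ^ 2 * t) * (1 / k - 1 / (k + 1))
      ≤ (1 - exp (-2 * (k * π) ^ 2 * t)) / (2 * (k * π) ^ 2) := by
  have hπ := pi_pos
  calc t / (1 + 2 * π ^ 2 * t) * (1 / k - 1 / (k + 1))
      = t / ((1 + 2 * π ^ 2 * t) * (k * (k + 1))) := by field_simp; ring
    _ ≤ t / (1 + 2 * (k * π) ^ 2 * t) := by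
      apply div_le_div_of_nonneg_left ht (by positivity)
      have : 0 ≤ π ^ 2 * t * k := by positivity
      nlinarith
    _ ≤ (1 - exp (-(2 * (k * π) ^ 2 * t))) / (2 * (k * π) ^ 2) :=
      div_one_add_mul_le_one_sub_exp_div (by positivity) ht
    _ = (1 - exp (-2 * (k * π) ^ 2 * t)) / (2 * (k * π) ^ 2) := by ring_nf

lemma summable_one_sub_exp_div (n : ℕ) {t : ℝ} (ht : 0 ≤ t) :
    Summable fun j : ℕ => (1 - exp (-2 * (((n : ℝ) + 1 + j) * π) ^ 2 * t))
      / (2 * (((n : ℝ) + 1 + j) * π) ^ 2) := by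
  have hsq : Summable fun j : ℕ => 1 / (2 * (((n : ℝ) + 1 + j) * π) ^ 2) := by
    have := ((summable_nat_add_iff (n + 1)).2 (summable_one_div_nat_pow.2 one_lt_two)).mul_left
      (1 / (2 * π ^ 2))
    refine this.congr fun j => ?_
    push_cast
    field_simp
    ring
  refine hsq.of_nonneg_of_le (fun j => one_sub_exp_div_nonneg _ ht) fun j => ?_
  gcongr
  linarith [exp_pos (-2 * (((n : ℝ) + 1 + j) * π) ^ 2 * t)]

theorem stmt_1 (n : ℕ) (t : ℝ) (ht : 0 < t) :
    (∑' j : ℕ, (1 - Real.exp (-2 * (((n : ℝ) + 1 + (j : ℝ)) * Real.pi) ^ 2 * t))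
        / (2 * (((n : ℝ) + 1 + (j : ℝ)) * Real.pi) ^ 2))
      ≥ t / (2 * (1 + 2 * Real.pi ^ 2 * t)) * (1 / (n : ℝ)) := by
  rcases Nat.eq_zero_or_pos n with rfl | hn
  -- `1 / (0 : ℝ) = 0`, so for `n = 0` only nonnegativity is claimed
  · simpa using tsum_nonneg fun j => one_sub_exp_div_nonneg _ ht.le
  have hn1 : (1 : ℝ) ≤ n := by exact_mod_cast hn
  have hlower : t / (1 + 2 * π ^ 2 * t) * (1 / ((n : ℝ) + 1)) ≤ ∑' j : ℕ,
      (1 - exp (-2 * (((n : ℝ) + 1 + j) * π) ^ 2 * t)) / (2 * (((n : ℝ) + 1 + j) * π) ^ 2) :=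
    hasSum_le (fun j => mul_inv_sub_inv_succ_le_one_sub_exp_div (by linarith) ht.le)
      ((hasSum_inv_sub_inv_succ (by positivity)).mul_left _)
      (summable_one_sub_exp_div n ht.le).hasSum
  calc t / (2 * (1 + 2 * π ^ 2 * t)) * (1 / (n : ℝ))
      = t / (1 + 2 * π ^ 2 * t) * (1 / (2 * n)) := by field_simp
    _ ≤ t / (1 + 2 * π ^ 2 * t) * (1 / ((n : ℝ) + 1)) := by gcongr; linarith
    _ ≤ _ := hlower
end

section
/- Let λ > 0, T > 0, m ∈ ℕ with m ≥ 1, and partition [0,T] into intervals I_i = (t_i, t_{i+1}] of equal length T/m. For t ∈ [0,T) define Ψ^i(t) = ∫_{I_i} [∫_{I_i} (χ_{r<t} e^{-λ(t-r)} - χ_{τ<t} e^{-λ(t-τ)}) dτ]² dr. Then ∑_{i=0}^{m-1} Ψ^i(t) ≤ 8 (T/m)² (1 - e^{-λ T/m})/λ. -/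
/-!
On a cell `(u, v]` of length `δ` the inner integral equals `δ g(r) - ∫ g`. If `g` takes values in
`[lo, hi] ⊆ [0, ∞)`, then `(a - b)² ≤ (hi - lo) (a + b)` for `a, b ∈ [δ lo, δ hi]`, which integrates
to the cell bound `2 δ² (hi - lo) ∫ g`. For `g(s) = χ_{s<t} e^{-λ(t-s)}` a cell to the left of `t`
has `hi - lo ≤ 1 - e^{-λδ}`, and these `∫ g` telescope to at most `1/λ` through the primitive
`e^{-λ(t - min s t)} / λ`; cells to the right of `t` contribute nothing; the single cell containing
`t` has `hi - lo ≤ 1` but `∫ g ≤ (1 - e^{-λδ}) / λ`. Hence the sum is at most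
`4 δ² (1 - e^{-λδ}) / λ`.
-/

open MeasureTheory Real Set

-- `cellDefect (ouKernel λ t) tᵢ tᵢ₊₁` is the paper's `Ψⁱ(t)`.
noncomputable def cellDefect (g : ℝ → ℝ) (u v : ℝ) : ℝ :=
  ∫ r in Ioc u v, (∫ τ in Ioc u v, (g r - g τ)) ^ 2

theorem sq_sub_le_mul_add_of_mem_Icc {a b lo hi : ℝ} (hlo : 0 ≤ lo) (ha : a ∈ Icc lo hi)
    (hb : b ∈ Icc lo hi) : (a - b) ^ 2 ≤ (hi - lo) * (a + b) := by
  obtain ⟨ha₁, ha₂⟩ := ha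
  obtain ⟨hb₁, hb₂⟩ := hb
  have hab : |a - b| ≤ a + b := abs_sub_le_iff.2 ⟨by linarith, by linarith⟩
  have hspread : |a - b| ≤ hi - lo := abs_sub_le_iff.2 ⟨by linarith, by linarith⟩
  calc (a - b) ^ 2 = |a - b| * |a - b| := by rw [abs_mul_abs_self, sq]
    _ ≤ (hi - lo) * (a + b) := mul_le_mul hspread hab (abs_nonneg _) (hspread.trans' (abs_nonneg _))

theorem integral_sq_integral_sub_le {α : Type*} [MeasurableSpace α] (μ : Measure α)
    [IsFiniteMeasure μ] {g : α → ℝ} {lo hi : ℝ} (hg : Integrable g μ) (hlo : 0 ≤ lo)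
    (hbound : ∀ᵐ x ∂μ, g x ∈ Icc lo hi) :
    ∫ x, (∫ y, (g x - g y) ∂μ) ^ 2 ∂μ ≤ 2 * μ.real univ ^ 2 * (hi - lo) * ∫ x, g x ∂μ := by
  set M := μ.real univ
  set G := ∫ x, g x ∂μ
  have hM : 0 ≤ M := measureReal_nonneg
  have hinner : ∀ x, ∫ y, (g x - g y) ∂μ = M * g x - G := fun x => by
    rw [integral_sub (integrable_const _) hg, integral_const, smul_eq_mul]
  have hG : G ∈ Icc (M * lo) (M * hi) := by
    constructor
    · calc M * lo = ∫ _, lo ∂μ := by rw [integral_const, smul_eq_mul]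
        _ ≤ G := integral_mono_ae (integrable_const _) hg (hbound.mono fun x hx => hx.1)
    · calc G ≤ ∫ _, hi ∂μ := integral_mono_ae hg (integrable_const _) (hbound.mono fun x hx => hx.2)
        _ = M * hi := by rw [integral_const, smul_eq_mul]
  have hpointwise : ∀ᵐ x ∂μ, (M * g x - G) ^ 2 ≤ M * (hi - lo) * (M * g x + G) :=
    hbound.mono fun x hx => by
      have := sq_sub_le_mul_add_of_mem_Icc (mul_nonneg hM hlo)
        ⟨mul_le_mul_of_nonneg_left hx.1 hM, mul_le_mul_of_nonneg_left hx.2 hM⟩ hG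
      linarith
  calc ∫ x, (∫ y, (g x - g y) ∂μ) ^ 2 ∂μ = ∫ x, (M * g x - G) ^ 2 ∂μ := by simp only [hinner]
    _ ≤ ∫ x, M * (hi - lo) * (M * g x + G) ∂μ :=
      integral_mono_of_nonneg (.of_forall fun _ => sq_nonneg _)
        (((hg.const_mul M).add (integrable_const G)).const_mul _) hpointwise
    _ = 2 * M ^ 2 * (hi - lo) * G := by
      rw [integral_const_mul, integral_add (hg.const_mul M) (integrable_const G),
        integral_const_mul, integral_const, smul_eq_mul]
      ring

theorem cellDefect_le {g : ℝ → ℝ} {u v lo hi : ℝ} (huv : u ≤ v) (hg : IntegrableOn g (Ioc u v))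
    (hlo : 0 ≤ lo) (hbound : ∀ x ∈ Ioo u v, g x ∈ Icc lo hi) :
    cellDefect g u v ≤ 2 * (v - u) ^ 2 * (hi - lo) * ∫ x in Ioc u v, g x := by
  have := integral_sq_integral_sub_le (volume.restrict (Ioc u v)) hg hlo
    ((ae_restrict_congr_set Ioo_ae_eq_Ioc).1 (ae_restrict_of_forall_mem measurableSet_Ioo hbound))
  rwa [measureReal_restrict_apply_univ, Real.volume_real_Ioc_of_le huv] at this

theorem sum_ite_mem_Ioo_le {δ t c : ℝ} (hc : 0 ≤ c) (n : ℕ) :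
    ∑ i ∈ Finset.range n, (if t ∈ Ioo (i * δ) ((i + 1 : ℕ) * δ) then c else 0) ≤ c := by
  rw [← Finset.sum_filter, Finset.sum_const, nsmul_eq_mul]
  refine mul_le_of_le_one_left hc (Nat.cast_le_one.2 (Finset.card_le_one.2 fun i hi j hj => ?_))
  obtain ⟨hi₁, hi₂⟩ := (Finset.mem_filter.1 hi).2
  obtain ⟨hj₁, hj₂⟩ := (Finset.mem_filter.1 hj).2
  have hδ : 0 < δ := by
    push_cast at hi₂
    nlinarith
  have hij : (i : ℝ) < (j + 1 : ℕ) := lt_of_mul_lt_mul_right (hi₁.trans hj₂) hδ.le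
  have hji : (j : ℝ) < (i + 1 : ℕ) := lt_of_mul_lt_mul_right (hj₁.trans hi₂) hδ.le
  norm_cast at hij hji
  omega

noncomputable def ouKernel (lam t s : ℝ) : ℝ := if s < t then exp (-lam * (t - s)) else 0

noncomputable def ouKernelPrimitive (lam t s : ℝ) : ℝ := exp (-lam * (t - min s t)) / lam

section ouKernel

variable {lam t u v : ℝ}

theorem ouKernel_mem_Icc (hlam : 0 ≤ lam) (s : ℝ) : ouKernel lam t s ∈ Icc 0 1 := by
  unfold ouKernel
  split_ifs with hs
  · exact ⟨(exp_pos _).le, exp_le_one_iff.2 (by nlinarith)⟩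
  · exact ⟨le_rfl, zero_le_one⟩

theorem ouKernel_eq_indicator :
    ouKernel lam t = (Iio t).indicator fun s => exp (-lam * (t - s)) := by
  ext s
  simp [ouKernel, indicator_apply]

theorem integrableOn_ouKernel : IntegrableOn (ouKernel lam t) (Ioc u v) := by
  rw [ouKernel_eq_indicator]
  exact (Continuous.integrableOn_Ioc (by fun_prop)).indicator measurableSet_Iio

theorem hasDerivWithinAt_ouKernelPrimitive (hlam : lam ≠ 0) (x : ℝ) :
    HasDerivWithinAt (ouKernelPrimitive lam t) (ouKernel lam t x) (Ioi x) x := by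
  rcases lt_or_ge x t with hxt | htx
  · have hexp : HasDerivAt (fun s => exp (-lam * (t - s)) / lam) (exp (-lam * (t - x))) x := by
      refine ((((hasDerivAt_id x).const_sub t).const_mul (-lam)).exp.div_const lam).congr_deriv ?_
      field_simp
      simp
    have heq : ouKernelPrimitive lam t =ᶠ[nhds x] fun s => exp (-lam * (t - s)) / lam := by
      filter_upwards [Iio_mem_nhds hxt] with s hs
      rw [ouKernelPrimitive, min_eq_left (le_of_lt hs)]
    rw [ouKernel, if_pos hxt]
    exact (hexp.congr_of_eventuallyEq heq).hasDerivWithinAt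
  · have hconst : EqOn (ouKernelPrimitive lam t) (fun _ => 1 / lam) (Ici x) := fun s hs => by
      simp [ouKernelPrimitive, min_eq_right (htx.trans hs)]
    rw [ouKernel, if_neg htx.not_gt]
    exact (hasDerivWithinAt_const x _ (1 / lam)).congr (fun s hs => hconst (mem_Ici.2 hs.le))
      (hconst self_mem_Ici)

theorem integral_ouKernel (hlam : lam ≠ 0) (huv : u ≤ v) :
    ∫ s in Ioc u v, ouKernel lam t s = ouKernelPrimitive lam t v - ouKernelPrimitive lam t u := by
  rw [← intervalIntegral.integral_of_le huv]
  refine intervalIntegral.integral_eq_sub_of_hasDeriv_right_of_le huv ?_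
    (fun x _ => hasDerivWithinAt_ouKernelPrimitive hlam x)
    ((intervalIntegrable_iff_integrableOn_Ioc_of_le huv).2 integrableOn_ouKernel)
  exact Continuous.continuousOn (by unfold ouKernelPrimitive; fun_prop)

theorem monotone_ouKernelPrimitive (hlam : 0 < lam) : Monotone (ouKernelPrimitive lam t) :=
  fun a b hab => by
    unfold ouKernelPrimitive
    gcongr ?_ / _
    exact exp_le_exp.2 (by nlinarith [min_le_min_right t hab])

theorem ouKernelPrimitive_le (hlam : 0 < lam) (s : ℝ) : ouKernelPrimitive lam t s ≤ 1 / lam := by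
  unfold ouKernelPrimitive
  gcongr
  exact exp_le_one_iff.2 (by nlinarith [min_le_right s t])

theorem ouKernelPrimitive_nonneg (hlam : 0 < lam) (s : ℝ) : 0 ≤ ouKernelPrimitive lam t s := by
  unfold ouKernelPrimitive
  positivity

theorem cellDefect_ouKernel_le_of_notMem_Ioo (hlam : 0 < lam) (huv : u ≤ v) (ht : t ∉ Ioo u v) :
    cellDefect (ouKernel lam t) u v ≤ 2 * (v - u) ^ 2 * (1 - exp (-lam * (v - u))) *
      (ouKernelPrimitive lam t v - ouKernelPrimitive lam t u) := by
  have hθ : exp (-lam * (v - u)) ≤ 1 := exp_le_one_iff.2 (by nlinarith)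
  have hP : 0 ≤ ouKernelPrimitive lam t v - ouKernelPrimitive lam t u :=
    sub_nonneg.2 (monotone_ouKernelPrimitive hlam huv)
  rw [← integral_ouKernel hlam.ne' huv] at hP ⊢
  rcases le_or_gt v t with hvt | htv
  · refine (cellDefect_le huv integrableOn_ouKernel (exp_pos (-lam * (t - u))).le
      (hi := exp (-lam * (t - v))) fun x hx => ?_).trans ?_
    · rw [ouKernel, if_pos (hx.2.trans_le hvt)]
      exact ⟨exp_le_exp.2 (by nlinarith [hx.1]), exp_le_exp.2 (by nlinarith [hx.2])⟩
    · have hsplit : exp (-lam * (t - u)) = exp (-lam * (t - v)) * exp (-lam * (v - u)) := by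
        rw [← exp_add]; ring_nf
      have hv : exp (-lam * (t - v)) ≤ 1 := exp_le_one_iff.2 (by nlinarith)
      gcongr 2 * (v - u) ^ 2 * ?_ * _
      rw [hsplit]
      nlinarith [exp_pos (-lam * (t - v))]
  · have htu : t ≤ u := not_lt.1 fun hut => ht ⟨hut, htv⟩
    refine (cellDefect_le huv integrableOn_ouKernel le_rfl (hi := 0)
      fun x hx => ?_).trans ?_
    · rw [ouKernel, if_neg (htu.trans hx.1.le).not_gt]
      exact ⟨le_rfl, le_rfl⟩
    · rw [sub_zero, mul_zero, zero_mul]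
      exact mul_nonneg (mul_nonneg (by positivity) (by linarith)) hP

theorem cellDefect_ouKernel_le_of_le (hlam : 0 < lam) (huv : u ≤ v) (htv : t ≤ v) :
    cellDefect (ouKernel lam t) u v ≤ 2 * (v - u) ^ 2 * (1 - exp (-lam * (v - u))) / lam := by
  have hPv : ouKernelPrimitive lam t v = 1 / lam := by simp [ouKernelPrimitive, min_eq_right htv]
  have hPu : exp (-lam * (v - u)) / lam ≤ ouKernelPrimitive lam t u := by
    unfold ouKernelPrimitive
    gcongr ?_ / _
    have hmin : u - (v - t) ≤ min u t := le_min (by linarith) (by linarith)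
    exact exp_le_exp.2 (by nlinarith)
  refine (cellDefect_le huv integrableOn_ouKernel le_rfl
    fun x _ => ouKernel_mem_Icc hlam.le x).trans ?_
  rw [integral_ouKernel hlam.ne' huv, hPv, sub_zero, mul_one, mul_div_assoc, sub_div]
  gcongr

end ouKernel

theorem stmt_9_general (lam T : ℝ) (hlam : 0 < lam) (hT : 0 < T) (m : ℕ)
    (t : ℝ) :
    ∑ i ∈ Finset.range m,
        ∫ r in Set.Ioc ((i : ℝ) * T / m) (((i : ℝ) + 1) * T / m),
          (∫ τ in Set.Ioc ((i : ℝ) * T / m) (((i : ℝ) + 1) * T / m),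
            ((if r < t then Real.exp (-lam * (t - r)) else 0)
              - (if τ < t then Real.exp (-lam * (t - τ)) else 0))) ^ 2
      ≤ 8 * (T / m) ^ 2 * (1 - Real.exp (-lam * T / m)) / lam := by
  set δ := T / m
  set P := ouKernelPrimitive lam t
  set c := 2 * δ ^ 2 * (1 - exp (-lam * δ)) with hc_def
  have hδ : 0 ≤ δ := div_nonneg hT.le m.cast_nonneg
  have hc : 0 ≤ c := mul_nonneg (by positivity) (sub_nonneg.2 (exp_le_one_iff.2 (by nlinarith)))
  have hcell : ∀ i : ℕ, cellDefect (ouKernel lam t) (i * δ) ((i + 1 : ℕ) * δ) ≤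
      c * (P ((i + 1 : ℕ) * δ) - P (i * δ)) +
        if t ∈ Ioo (i * δ) ((i + 1 : ℕ) * δ) then c / lam else 0 := fun i => by
    have hlen : ((i + 1 : ℕ) : ℝ) * δ - i * δ = δ := by push_cast; ring
    have hle : (i : ℝ) * δ ≤ (i + 1 : ℕ) * δ := by linarith
    split_ifs with ht
    · have := cellDefect_ouKernel_le_of_le hlam hle ht.2.le
      rw [hlen] at this
      linarith [mul_nonneg hc (sub_nonneg.2 (monotone_ouKernelPrimitive (t := t) hlam hle))]
    · simpa only [hlen, add_zero] using cellDefect_ouKernel_le_of_notMem_Ioo hlam hle ht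
  have htelescope : ∑ i ∈ Finset.range m, (P ((i + 1 : ℕ) * δ) - P (i * δ)) ≤ 1 / lam := by
    rw [Finset.sum_range_sub (fun i : ℕ => P (i * δ)), Nat.cast_zero, zero_mul]
    linarith [ouKernelPrimitive_le (t := t) hlam (m * δ), ouKernelPrimitive_nonneg (t := t) hlam 0]
  calc _ = ∑ i ∈ Finset.range m, cellDefect (ouKernel lam t) (i * δ) ((i + 1 : ℕ) * δ) := by
        push_cast
        simp only [mul_div_assoc]
        rfl
    _ ≤ ∑ i ∈ Finset.range m, (c * (P ((i + 1 : ℕ) * δ) - P (i * δ)) +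
        if t ∈ Ioo (i * δ) ((i + 1 : ℕ) * δ) then c / lam else 0) :=
      Finset.sum_le_sum fun i _ => hcell i
    _ ≤ c * (1 / lam) + c / lam := by
      rw [Finset.sum_add_distrib, ← Finset.mul_sum]
      gcongr
      exact sum_ite_mem_Ioo_le (by positivity) m
    _ ≤ 4 * (c / lam) := by rw [mul_one_div]; linarith [div_nonneg hc hlam.le]
    _ = 8 * (T / m) ^ 2 * (1 - Real.exp (-lam * T / m)) / lam := by
      rw [mul_div_assoc (-lam), hc_def]
      ring

theorem stmt_9 (lam T : ℝ) (hlam : 0 < lam) (hT : 0 < T) (m : ℕ) (hm : 1 ≤ m)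
    (t : ℝ) (ht : t ∈ Set.Ico 0 T) :
    ∑ i ∈ Finset.range m,
        ∫ r in Set.Ioc ((i : ℝ) * T / m) (((i : ℝ) + 1) * T / m),
          (∫ τ in Set.Ioc ((i : ℝ) * T / m) (((i : ℝ) + 1) * T / m),
            ((if r < t then Real.exp (-lam * (t - r)) else 0)
              - (if τ < t then Real.exp (-lam * (t - τ)) else 0))) ^ 2
      ≤ 8 * (T / m) ^ 2 * (1 - Real.exp (-lam * T / m)) / lam :=
  stmt_9_general lam T hlam hT m t
end
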